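/- The extended occupancy distribution is a binomial mixture of classical occupancy distributions: for 0 ≤ k ≤ min(n, m), Occ(k|n, m, θ) = ∑_{r=0}^{n} Bin(r|n, θ)·Occ(k|r, m, 1), where Bin(r|n, θ) = C(n, r)·θ^r·(1−θ)^{n−r} and Occ(k|r, m, 1) = (m)_k·S(r, k)/m^r with S(r, k) the central Stirling numbers of the second kind. -/

import Mathlib

open Finset

/-- Extended occupancy mass function. -/
noncomputable def Occ (k n m : ℕ) (θ : ℝ) : ℝ :=
  (Nat.choose m k : ℝ) *
    ∑ i ∈ Finset.range (k + 1),
      (Nat.choose k i : ℝ) * (-1) ^ (k - i) * (1 - θ * ((m : ℝ) - i) / m) ^ n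

/-- Central Stirling numbers of the second kind. -/
noncomputable def Stir (r k : ℕ) : ℝ :=
  (1 / (Nat.factorial k : ℝ)) *
    ∑ i ∈ Finset.range (k + 1), (Nat.choose k i : ℝ) * (-1) ^ (k - i) * (i : ℝ) ^ r

/-- Falling factorial `(t)_k = t (t-1) ⋯ (t-k+1)`. -/
noncomputable def ffall (t : ℝ) (k : ℕ) : ℝ := ∏ i ∈ Finset.range k, (t - (i : ℝ))

/-!
Write `1 - θ (m - i) / m = θ (i / m) + (1 - θ)` and expand the `n`-th power binomially: each
term of the inclusion–exclusion sum defining `Occ` becomes the binomial probability generating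
function evaluated at `i / m`. Exchanging the two sums leaves, for each `r`, the classical
occupancy probability `C(m, k) ∑ᵢ C(k, i) (-1)^(k-i) (i / m)^r = (m)ₖ S(r, k) / m^r`.
-/

theorem ffall_eq_descPochhammer_eval (t : ℝ) (k : ℕ) :
    ffall t k = (descPochhammer ℝ k).eval t :=
  (descPochhammer_eval_eq_prod_range k t).symm

theorem ffall_natCast (m k : ℕ) : ffall m k = k.factorial * m.choose k := by
  rw [ffall_eq_descPochhammer_eval, descPochhammer_eval_eq_descFactorial,
    Nat.descFactorial_eq_factorial_mul_choose, Nat.cast_mul]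

theorem ffall_natCast_mul_stir_div_pow (m k r : ℕ) :
    ffall m k * Stir r k / (m : ℝ) ^ r =
      m.choose k * ∑ i ∈ range (k + 1), (k.choose i : ℝ) * (-1) ^ (k - i) * ((i : ℝ) / m) ^ r := by
  simp only [ffall_natCast, Stir, div_pow, mul_div_assoc', ← sum_div, mul_sum]
  field_simp

theorem sum_binomial_mul_pow {R : Type*} [CommRing R] (n : ℕ) (θ x : R) :
    ∑ r ∈ range (n + 1), (n.choose r : R) * θ ^ r * (1 - θ) ^ (n - r) * x ^ r =
      (θ * x + (1 - θ)) ^ n := by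
  rw [add_pow]
  refine sum_congr rfl fun r _ => ?_
  ring

theorem occupancy_binomial_mixture_general (n m k : ℕ) (hm : 0 < m) (θ : ℝ) :
    Occ k n m θ =
      ∑ r ∈ Finset.range (n + 1),
        ((Nat.choose n r : ℝ) * θ ^ r * (1 - θ) ^ (n - r)) *
          (ffall (m : ℝ) k * Stir r k / (m : ℝ) ^ r) := by
  have hthin (i : ℕ) : 1 - θ * ((m : ℝ) - i) / m = θ * ((i : ℝ) / m) + (1 - θ) := by
    field_simp
    ring
  simp only [ffall_natCast_mul_stir_div_pow, Occ, hthin, ← sum_binomial_mul_pow, mul_sum]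
  rw [sum_comm]
  refine sum_congr rfl fun i _ => sum_congr rfl fun r _ => ?_
  ring

theorem occupancy_binomial_mixture (n m k : ℕ) (hm : 0 < m) (hk : k ≤ min n m)
    (θ : ℝ) (hθ0 : 0 < θ) (hθ1 : θ ≤ 1) :
    Occ k n m θ =
      ∑ r ∈ Finset.range (n + 1),
        ((Nat.choose n r : ℝ) * θ ^ r * (1 - θ) ^ (n - r)) *
          (ffall (m : ℝ) k * Stir r k / (m : ℝ) ^ r) :=
  occupancy_binomial_mixture_general n m k hm θ
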